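/- arXiv:1912.05424 — 3 statements merged into one kernel-verified Lean document; each statement's English description precedes it below -/
import Mathlib

section
/- Let A be a commutative ring and n ≥ 3. Then the elementary subgroup E_n(A) generated by elementary transvections is a normal subgroup of GL_n(A). -/
/-!
Conjugating `e_{ij}(a)` by `g` gives `1 + z uᵀ` with `z = g eᵢ` unimodular (`c ⬝ᵥ z = 1` for
`c = eᵢᵀ g⁻¹`) and `u ⬝ᵥ z = 0`. Such a `u` is the sum of the vectors
`c_k u_l (z_k e_l - z_l e_k)`, all orthogonal to `z`, so `1 + z uᵀ` is the product of the matrices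
`1 + z (b (z_k e_l - z_l e_k))ᵀ`. To see that each of these is elementary, split `z = x + y` with
`y` the part of `z` supported on `{k, l}`: then `1 + x wᵀ` has `x` and `w` of disjoint supports,
so it is a product of transvections, while `y` and `w` both vanish at a third index `m`, which makes
`1 + y wᵀ` the commutator of `1 + y e_mᵀ` and `1 + e_m wᵀ` (Whitehead's trick).
-/

/-- The elementary subgroup `E_n(R) ⊆ GL_n(R)`, generated by the elementary
transvections `e_{ij}(a) = 1 + a·E_{ij}`, `i ≠ j`. -/
def elemGL (n : ℕ) (R : Type*) [CommRing R] : Subgroup (GL (Fin n) R) :=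
  Subgroup.closure {g | ∃ (i j : Fin n) (a : R), i ≠ j ∧
    (g : Matrix (Fin n) (Fin n) R) = Matrix.transvection i j a}

open Matrix

section Ring

variable {R : Type*} [Ring R]

theorem one_add_mul_one_add_of_mul_eq_zero {a b : R} (h : a * b = 0) :
    (1 + a) * (1 + b) = 1 + (a + b) := by
  simp only [add_mul, mul_add, one_mul, mul_one, h, add_zero]
  abel

theorem one_add_sum_mem_of_mul_eq_zero {ι : Type*} (S : Submonoid R) (s : Finset ι) (N : ι → R)
    (hN : ∀ p ∈ s, ∀ q ∈ s, N p * N q = 0) (hS : ∀ p ∈ s, 1 + N p ∈ S) :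
    1 + ∑ p ∈ s, N p ∈ S := by
  classical
  induction s using Finset.induction_on with
  | empty => simp [S.one_mem]
  | insert a s ha ih =>
    have hmul : N a * ∑ p ∈ s, N p = 0 := by
      rw [Finset.mul_sum]
      exact Finset.sum_eq_zero fun q hq => hN a (by simp) q (by simp [hq])
    rw [Finset.sum_insert ha, ← one_add_mul_one_add_of_mul_eq_zero hmul]
    exact S.mul_mem (hS a (by simp))
      (ih (fun p hp q hq => hN p (by simp [hp]) q (by simp [hq])) fun p hp => hS p (by simp [hp]))

theorem one_add_mul_one_add_mul_one_sub_mul_one_sub {P Q : R} (hPP : P * P = 0)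
    (hQQ : Q * Q = 0) (hQP : Q * P = 0) :
    (1 + P) * (1 + Q) * (1 - P) * (1 - Q) = 1 + P * Q := by
  have hPQP : P * Q * P = 0 := by rw [mul_assoc, hQP, mul_zero]
  have hPQQ : P * Q * Q = 0 := by rw [mul_assoc, hQQ, mul_zero]
  simp only [mul_add, add_mul, mul_sub, sub_mul, mul_one, one_mul, hPP, hQQ, hQP, hPQP, hPQQ,
    zero_mul]
  abel

end Ring

theorem Matrix.single_eq_vecMulVec {ι R : Type*} [DecidableEq ι] [MulZeroOneClass R]
    (i j : ι) (a : R) : single i j a = vecMulVec (Pi.single i 1) (Pi.single j a) := by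
  ext p q
  by_cases hp : i = p <;> by_cases hq : j = q <;>
    simp [single, vecMulVec, Pi.single_apply, hp, hq, eq_comm]

theorem Matrix.vecMulVec_sum {ι κ σ R : Type*} [NonUnitalNonAssocSemiring R] (x : ι → R)
    (s : Finset σ) (f : σ → κ → R) :
    vecMulVec x (∑ p ∈ s, f p) = ∑ p ∈ s, vecMulVec x (f p) := by
  ext
  simp [vecMulVec_apply, Finset.mul_sum, Matrix.sum_apply]

theorem Matrix.eq_sum_smul_single_sub_single {ι R : Type*} [Fintype ι] [DecidableEq ι]
    [CommRing R] {z u c : ι → R} (hc : c ⬝ᵥ z = 1) (hu : u ⬝ᵥ z = 0) :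
    u = ∑ p : ι × ι, (c p.1 * u p.2) • (Pi.single p.2 (z p.1) - Pi.single p.1 (z p.2)) := by
  ext q
  have hcz : ∑ k, c k * u q * z k = u q := by
    simp_rw [mul_right_comm _ (u q), ← Finset.sum_mul]
    rw [← dotProduct, hc, one_mul]
  have huz : ∑ l, c q * u l * z l = 0 := by
    simp_rw [mul_assoc, ← Finset.mul_sum]
    rw [← dotProduct, hu, mul_zero]
  simp [Finset.sum_apply, Pi.single_apply, mul_sub, Finset.sum_sub_distrib,
    Fintype.sum_prod_type, hcz, huz]

def elemMatrices (n : ℕ) (A : Type*) [CommRing A] : Submonoid (Matrix (Fin n) (Fin n) A) :=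
  (elemGL n A).toSubmonoid.map (Units.coeHom _)

namespace elemMatrices

variable {n : ℕ} {A : Type*} [CommRing A]

theorem coe_mem_iff {g : GL (Fin n) A} :
    (g : Matrix (Fin n) (Fin n) A) ∈ elemMatrices n A ↔ g ∈ elemGL n A :=
  Submonoid.mem_map_iff_mem Units.val_injective

theorem transvection_mem {i j : Fin n} (hij : i ≠ j) (a : A) :
    transvection i j a ∈ elemMatrices n A := by
  let t : GL (Fin n) A :=
    ⟨transvection i j a, transvection i j (-a),
      by simp [transvection_mul_transvection_same _ _ hij],
      by simp [transvection_mul_transvection_same _ _ hij]⟩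
  exact coe_mem_iff (g := t) |>.2 (Subgroup.subset_closure ⟨i, j, a, hij, rfl⟩)


theorem one_add_vecMulVec_mem_of_mul_eq_zero {z w : Fin n → A} (h : ∀ m, z m * w m = 0) :
    1 + vecMulVec z w ∈ elemMatrices n A := by
  rw [matrix_eq_sum_single (vecMulVec z w), ← Fintype.sum_prod_type']
  refine one_add_sum_mem_of_mul_eq_zero _ _ _ (fun p _ q _ => ?_) fun p _ => ?_
  · by_cases hpq : p.2 = q.1
    · rw [vecMulVec_apply, vecMulVec_apply, ← hpq, single_mul_single_same,
        show z p.1 * w p.2 * (z p.2 * w q.2) = z p.1 * (z p.2 * w p.2) * w q.2 by ring,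
        h, mul_zero, zero_mul, single_zero]
    · exact single_mul_single_of_ne (h := hpq) ..
  · by_cases hp : p.1 = p.2
    · rw [vecMulVec_apply, hp, h, single_zero, add_zero]
      exact Submonoid.one_mem _
    · exact transvection_mem hp _

theorem one_add_vecMulVec_mem_of_dotProduct_eq_zero_of_apply_eq_zero {z w : Fin n → A}
    (hwz : w ⬝ᵥ z = 0) {m : Fin n} (hz : z m = 0) (hw : w m = 0) :
    1 + vecMulVec z w ∈ elemMatrices n A := by
  have hcol : ∀ x : Fin n → A, x m = 0 →
      1 + vecMulVec x (Pi.single m 1) ∈ elemMatrices n A :=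
    fun x hx => one_add_vecMulVec_mem_of_mul_eq_zero fun k => by
      by_cases hk : k = m <;> simp [hk, hx]
  have hrow : ∀ y : Fin n → A, y m = 0 →
      1 + vecMulVec (Pi.single m 1) y ∈ elemMatrices n A :=
    fun y hy => one_add_vecMulVec_mem_of_mul_eq_zero fun k => by
      by_cases hk : k = m <;> simp [hk, hy]
  have hPQ : vecMulVec z (Pi.single m 1) * vecMulVec (Pi.single m 1) w = vecMulVec z w := by
    simp [vecMulVec_mul_vecMulVec]
  rw [← hPQ, ← one_add_mul_one_add_mul_one_sub_mul_one_sub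
    (by simp [vecMulVec_mul_vecMulVec, hz]) (by simp [vecMulVec_mul_vecMulVec, hw])
    (by simp [vecMulVec_mul_vecMulVec, hwz]),
    sub_eq_add_neg, sub_eq_add_neg, ← neg_vecMulVec, ← vecMulVec_neg]
  exact mul_mem (mul_mem (mul_mem (hcol z hz) (hrow w hw)) (hcol (-z) (by simp [hz])))
    (hrow (-w) (by simp [hw]))

theorem one_add_vecMulVec_smul_single_sub_single_mem (hn : 3 ≤ n) (v : Fin n → A) (k l : Fin n)
    (b : A) :
    1 + vecMulVec v (b • (Pi.single l (v k) - Pi.single k (v l))) ∈ elemMatrices n A := by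
  rcases eq_or_ne k l with rfl | hkl
  · simp
  obtain ⟨m, hm⟩ : ({k, l}ᶜ : Finset (Fin n)).Nonempty := by
    rw [← Finset.card_pos, Finset.card_compl, Fintype.card_fin]
    have := Finset.card_le_two (a := k) (b := l)
    omega
  obtain ⟨hmk, hml⟩ : m ≠ k ∧ m ≠ l := by simpa using hm
  set w : Fin n → A := b • (Pi.single l (v k) - Pi.single k (v l))
  set y : Fin n → A := Pi.single k (v k) + Pi.single l (v l)
  have hwy : w ⬝ᵥ y = 0 := by
    simp [w, y, hkl, hkl.symm]
    ring
  rw [← sub_add_cancel v y, add_vecMulVec, ← one_add_mul_one_add_of_mul_eq_zero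
    (by simp [vecMulVec_mul_vecMulVec, hwy])]
  refine mul_mem (one_add_vecMulVec_mem_of_mul_eq_zero fun p => ?_)
    (one_add_vecMulVec_mem_of_dotProduct_eq_zero_of_apply_eq_zero hwy (m := m) ?_ ?_)
  · by_cases hpk : p = k <;> by_cases hpl : p = l <;> simp [w, y, hpk, hpl, hkl]
  · simp [y, hmk, hml]
  · simp [w, hmk, hml]

theorem one_add_vecMulVec_mem (hn : 3 ≤ n) {z u c : Fin n → A} (hc : c ⬝ᵥ z = 1)
    (hu : u ⬝ᵥ z = 0) : 1 + vecMulVec z u ∈ elemMatrices n A := by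
  rw [eq_sum_smul_single_sub_single hc hu, vecMulVec_sum]
  refine one_add_sum_mem_of_mul_eq_zero _ _ _ (fun p _ q _ => ?_) fun p _ =>
    one_add_vecMulVec_smul_single_sub_single_mem hn z p.1 p.2 _
  simp [vecMulVec_mul_vecMulVec, mul_comm]

theorem conj_transvection_mem (hn : 3 ≤ n) (g : GL (Fin n) A) {i j : Fin n} (hij : i ≠ j)
    (a : A) : (g : Matrix (Fin n) (Fin n) A) * transvection i j a * (g⁻¹ : GL (Fin n) A) ∈
      elemMatrices n A := by
  have hginv : ((g⁻¹ : GL (Fin n) A) : Matrix (Fin n) (Fin n) A) * g = 1 := g.inv_mul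
  rw [transvection, single_eq_vecMulVec, mul_add, add_mul, mul_one, g.mul_inv, mul_vecMulVec,
    vecMulVec_mul]
  refine one_add_vecMulVec_mem hn (c := Pi.single i 1 ᵥ* (g⁻¹ : GL (Fin n) A)) ?_ ?_
  · rw [dotProduct_mulVec, vecMul_vecMul, hginv, vecMul_one]
    simp
  · rw [dotProduct_mulVec, vecMul_vecMul, hginv, vecMul_one]
    simp [hij]

end elemMatrices

theorem elemGL_normal (n : ℕ) (hn : 3 ≤ n) (A : Type*) [CommRing A] :
    (elemGL n A).Normal := by
  refine ⟨fun x hx g => ?_⟩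
  have hconj : elemGL n A ≤ (elemGL n A).comap (MulAut.conj g).toMonoidHom := by
    refine (Subgroup.closure_le _).2 ?_
    rintro t ⟨i, j, a, hij, ht⟩
    rw [SetLike.mem_coe, Subgroup.mem_comap, ← elemMatrices.coe_mem_iff]
    simpa [ht] using elemMatrices.conj_transvection_mem hn g hij a
  simpa using hconj hx
end

section
/- Let k be a field, A a semilocal regular domain containing k, and K the field of fractions of A. Then for n ≥ 3 the natural homomorphism GL_n(A)/E_n(A) → GL_n(K)/E_n(K) is injective; equivalently, every matrix in GL_n(A) that is a product of elementary matrices over K is already a product of elementary matrices over A. -/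
/-- The homomorphism `GL_n(R) → GL_n(S)` induced by a ring homomorphism. -/
def glMap {n : ℕ} {R S : Type*} [CommRing R] [CommRing S] (f : R →+* S) :
    GL (Fin n) R →* GL (Fin n) S := Units.map (RingHom.mapMatrix f).toMonoidHom

/-- A regular local ring: a Noetherian local ring whose maximal ideal is generated by
`dim R` elements. -/
def IsRegularLocalRingOld (R : Type*) [CommRing R] [IsLocalRing R] : Prop :=
  IsNoetherianRing R ∧ ∃ s : Finset R,
    Ideal.span (s : Set R) = IsLocalRing.maximalIdeal R ∧
      (s.card : WithBot ℕ∞) = ringKrullDim R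

/-- A regular (commutative Noetherian) ring: all localizations at primes are regular local. -/
def IsRegularRingOld (R : Type*) [CommRing R] : Prop :=
  IsNoetherianRing R ∧ ∀ (p : Ideal R) (hp : p.IsPrime),
    IsRegularLocalRingOld (Localization.AtPrime p)

/-!
A semilocal ring has stable rank one: if `a` and `b` are coprime, then `a + t * b` is a unit for
some `t`, by choosing `t` modulo each of the finitely many maximal ideals and gluing with the
Chinese remainder theorem. This lets Gaussian elimination by elementary row and column
operations bring every `g ∈ GL_n(A)` to a diagonal matrix, and a diagonal matrix of determinant
one is a product of Whitehead matrices `diag(u, u⁻¹)`, which are elementary. Hence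
`SL_n(A) = E_n(A)`, and `g` has determinant one because its image over the fraction field does.
-/

open Matrix

theorem exists_isUnit_add_mul_of_isCoprime {R : Type*} [CommRing R] [Finite (MaximalSpectrum R)]
    {a b : R} (h : IsCoprime a b) : ∃ t, IsUnit (a + t * b) := by
  have avoid (P : MaximalSpectrum R) : ∃ τ, a + τ * b ∉ P.asIdeal := by
    by_cases ha : a ∈ P.asIdeal
    · refine ⟨1, fun hab => P.isMaximal.ne_top ?_⟩
      have hb : b ∈ P.asIdeal := by simpa using P.asIdeal.sub_mem hab ha
      obtain ⟨x, y, hxy⟩ := h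
      rw [Ideal.eq_top_iff_one, ← hxy]
      exact P.asIdeal.add_mem (P.asIdeal.mul_mem_left x ha) (P.asIdeal.mul_mem_left y hb)
    · exact ⟨0, by simpa using ha⟩
  choose τ hτ using avoid
  obtain ⟨t, ht⟩ :=
    Ideal.exists_forall_sub_mem_ideal (I := fun P : MaximalSpectrum R => P.asIdeal)
    (fun P Q hPQ => Ideal.isCoprime_of_isMaximal (MaximalSpectrum.ext_iff.ne.mp hPQ)) τ
  refine ⟨t, by_contra fun hu => ?_⟩
  obtain ⟨P, hP, hmem⟩ := exists_max_ideal_of_mem_nonunits hu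
  refine hτ ⟨P, hP⟩ ?_
  have : a + τ ⟨P, hP⟩ * b = (a + t * b) - (t - τ ⟨P, hP⟩) * b := by ring
  rw [this]
  exact P.sub_mem hmem (P.mul_mem_right _ (ht ⟨P, hP⟩))

section Elementary

variable {n : ℕ} {R : Type*} [CommRing R]

def transvectionGL (i j : Fin n) (hij : i ≠ j) (a : R) : GL (Fin n) R where
  val := transvection i j a
  inv := transvection i j (-a)
  val_inv := by simp [transvection_mul_transvection_same _ _ hij]
  inv_val := by simp [transvection_mul_transvection_same _ _ hij]

theorem transvectionGL_mem_elemGL (i j : Fin n) (hij : i ≠ j) (a : R) :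
    transvectionGL i j hij a ∈ elemGL n R :=
  Subgroup.subset_closure ⟨i, j, a, hij, rfl⟩

theorem elemGL_le_ker_det : elemGL n R ≤ GeneralLinearGroup.det.ker :=
  Subgroup.closure_le _ |>.mpr fun g ⟨i, j, a, hij, hg⟩ => by
    ext; simp [GeneralLinearGroup.det, hg, hij]

theorem det_eq_one_of_mem_elemGL {g : GL (Fin n) R} (hg : g ∈ elemGL n R) :
    det (g : Matrix (Fin n) (Fin n) R) = 1 :=
  congrArg Units.val (elemGL_le_ker_det hg)

theorem exists_mem_elemGL_val_eq_one_add_sum_single (P : Finset (Fin n × Fin n))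
    (hP : ∀ p ∈ P, ∀ q ∈ P, p.2 ≠ q.1) (c : Fin n × Fin n → R) :
    ∃ l ∈ elemGL n R,
      (l : Matrix (Fin n) (Fin n) R) = 1 + ∑ p ∈ P, single p.1 p.2 (c p) := by
  induction P using Finset.induction with
  | empty => exact ⟨1, one_mem _, by simp⟩
  | @insert p P hp ih =>
    obtain ⟨l, hl, hlP⟩ := ih fun q hq r hr => hP q (by simp [hq]) r (by simp [hr])
    have hpp := hP p (Finset.mem_insert_self p P) p (Finset.mem_insert_self p P)
    refine ⟨l * transvectionGL p.1 p.2 (Ne.symm hpp) (c p),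
      mul_mem hl (transvectionGL_mem_elemGL _ _ _ _), ?_⟩
    have hvanish : (∑ q ∈ P, single q.1 q.2 (c q)) * single p.1 p.2 (c p) = 0 := by
      rw [Finset.sum_mul]
      exact Finset.sum_eq_zero fun q hq =>
        single_mul_single_of_ne (h := hP q (by simp [hq]) p (by simp)) ..
    rw [Units.val_mul, hlP, Finset.sum_insert hp]
    change _ * (1 + _) = _
    simp only [mul_add, add_mul, mul_one, one_mul, hvanish]
    abel

theorem exists_mem_elemGL_val_eq_one_add_vecMulVec (x y : Fin n → R)
    (hxy : ∀ i, x i = 0 ∨ y i = 0) :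
    ∃ l ∈ elemGL n R, (l : Matrix (Fin n) (Fin n) R) = 1 + vecMulVec x y := by
  classical
  obtain ⟨l, hl, hlP⟩ := exists_mem_elemGL_val_eq_one_add_sum_single
    (Finset.univ.filter fun p : Fin n × Fin n => x p.1 ≠ 0 ∧ y p.2 ≠ 0)
    (fun p hp q hq hpq => by
      simp only [Finset.mem_filter, Finset.mem_univ, true_and] at hp hq
      rcases hxy q.1 with h | h
      · exact hq.1 h
      · exact hp.2 (hpq ▸ h))
    (fun p => x p.1 * y p.2)
  refine ⟨l, hl, hlP.trans ?_⟩
  rw [Finset.sum_filter_of_ne fun p _ h =>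
    ⟨fun hx => h (by simp [hx]), fun hy => h (by simp [hy])⟩]
  ext a b
  simp [Matrix.sum_apply, single_apply, vecMulVec_apply, Fintype.sum_prod_type, ite_and]

def diagonalGL : (Fin n → Rˣ) →* GL (Fin n) R :=
  (Units.map (diagonalRingHom (Fin n) R).toMonoidHom).comp MulEquiv.piUnits.symm.toMonoidHom

theorem val_diagonalGL (d : Fin n → Rˣ) :
    (diagonalGL d : Matrix (Fin n) (Fin n) R) = diagonal fun i => (d i : R) := rfl

theorem diagonalGL_mulSingle_mul_mulSingle_inv_mem_elemGL {i j : Fin n} (hij : i ≠ j) (u : Rˣ) :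
    diagonalGL (Pi.mulSingle i u * Pi.mulSingle j u⁻¹) ∈ elemGL n R := by
  have hw : diagonalGL (Pi.mulSingle i u * Pi.mulSingle j u⁻¹) =
      transvectionGL i j hij ((u : R) - 1) * transvectionGL j i hij.symm 1 *
        transvectionGL i j hij ((u⁻¹ : Rˣ) - 1 : R) * transvectionGL j i hij.symm (-u : R) := by
    ext a b
    simp only [val_diagonalGL, Units.val_mul, transvectionGL]
    by_cases hai : a = i <;> by_cases haj : a = j <;> by_cases hbi : b = i <;>
      by_cases hbj : b = j <;>
      simp_all [diagonal_apply, transvection, Matrix.add_mul, Matrix.mul_add, single_apply,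
        one_apply, Pi.mulSingle_apply, hij.symm, eq_comm] <;> grind [Units.mul_inv]
  rw [hw]
  refine mul_mem (mul_mem (mul_mem ?_ ?_) ?_) ?_ <;> exact transvectionGL_mem_elemGL _ _ _ _

theorem diagonalGL_mem_elemGL_of_prod_eq_one (d : Fin n → Rˣ) (hd : ∏ i, d i = 1) :
    diagonalGL d ∈ elemGL n R := by
  rcases isEmpty_or_nonempty (Fin n) with hn | ⟨⟨i₀⟩⟩
  · rw [Subsingleton.elim d 1, map_one]
    exact one_mem _
  have hsplit : d = ∏ i, Pi.mulSingle i (d i) * Pi.mulSingle i₀ (d i)⁻¹ := by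
    have : ∏ i, (Pi.mulSingle i₀ (d i)⁻¹ : Fin n → Rˣ) =
        Pi.mulSingle i₀ (∏ i, (d i)⁻¹) :=
      (map_prod (MonoidHom.mulSingle (fun _ => Rˣ) i₀) (fun i => (d i)⁻¹) _).symm
    rw [Finset.prod_mul_distrib, Finset.univ_prod_mulSingle, this, Finset.prod_inv_distrib, hd,
      inv_one, Pi.mulSingle_one, mul_one]
  change d ∈ (elemGL n R).comap diagonalGL
  rw [hsplit]
  refine Subgroup.prod_mem _ fun i _ => ?_
  obtain rfl | hi := eq_or_ne i i₀
  · rw [← Pi.mulSingle_mul, mul_inv_cancel, Pi.mulSingle_one]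
    exact one_mem _
  · exact diagonalGL_mulSingle_mul_mulSingle_inv_mem_elemGL hi _

theorem mem_elemGL_of_isDiag {g : GL (Fin n) R} (hdiag : (g : Matrix (Fin n) (Fin n) R).IsDiag)
    (hdet : det (g : Matrix (Fin n) (Fin n) R) = 1) : g ∈ elemGL n R := by
  have hprod : ∏ i, (g : Matrix (Fin n) (Fin n) R) i i = 1 := by
    rwa [← hdiag.diagonal_diag, det_diagonal] at hdet
  have hunit (i : Fin n) : IsUnit ((g : Matrix (Fin n) (Fin n) R) i i) :=
    isUnit_of_dvd_one (hprod ▸ Finset.dvd_prod_of_mem _ (Finset.mem_univ i))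
  have hg : g = diagonalGL fun i => (hunit i).unit := by
    ext : 1
    conv_lhs => rw [← hdiag.diagonal_diag]
    rfl
  rw [hg]
  exact diagonalGL_mem_elemGL_of_prod_eq_one _ (Units.ext (by simpa using hprod))

end Elementary

section Elimination

variable {n : ℕ} {R : Type*} [CommRing R]

def IsClearedOn (D : Finset (Fin n)) (M : Matrix (Fin n) (Fin n) R) : Prop :=
  ∀ i j, i ≠ j → (i ∈ D ∨ j ∈ D) → M i j = 0

theorem exists_mem_elemGL_clear_row_col (M : Matrix (Fin n) (Fin n) R) (e : Fin n) (u : Rˣ)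
    (hu : M e e = u) :
    ∃ l ∈ elemGL n R, ∃ r ∈ elemGL n R,
      (∀ a, a ≠ e → ((l : Matrix (Fin n) (Fin n) R) * M * r) a e = 0) ∧
      (∀ b, b ≠ e → ((l : Matrix (Fin n) (Fin n) R) * M * r) e b = 0) ∧
      ∀ a b, a ≠ e → b ≠ e →
        ((l : Matrix (Fin n) (Fin n) R) * M * r) a b = M a b - M a e * ↑u⁻¹ * M e b := by
  obtain ⟨l, hl, hlM⟩ := exists_mem_elemGL_val_eq_one_add_vecMulVec
    (fun a => if a = e then 0 else -(M a e * ↑u⁻¹)) (Pi.single e 1) fun i => by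
      by_cases hi : i = e <;> simp [hi]
  obtain ⟨r, hr, hrM⟩ := exists_mem_elemGL_val_eq_one_add_vecMulVec
    (Pi.single e 1) (fun b => if b = e then 0 else -(↑u⁻¹ * M e b)) fun i => by
      by_cases hi : i = e <;> simp [hi]
  have hu_inv : (u : R) * ↑u⁻¹ = 1 := u.mul_inv
  have key (a b : Fin n) : ((l : Matrix (Fin n) (Fin n) R) * M * r) a b =
      M a b + (if a = e then 0 else -(M a e * ↑u⁻¹)) * M e b +
        (M a e + (if a = e then 0 else -(M a e * ↑u⁻¹)) * u) *
          (if b = e then 0 else -(↑u⁻¹ * M e b)) := by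
    simp [hlM, hrM, Matrix.add_mul, Matrix.mul_add, vecMulVec_mul, mul_vecMulVec,
      vecMulVec_apply, ← hu]
  refine ⟨l, hl, r, hr, fun a ha => ?_, fun b hb => ?_, fun a b ha hb => ?_⟩ <;>
    rw [key] <;> grind

theorem exists_mem_elemGL_isUnit_pivot [Finite (MaximalSpectrum R)] {D : Finset (Fin n)}
    {e : Fin n} (he : e ∉ D) (g : GL (Fin n) R)
    (hg : IsClearedOn D (g : Matrix (Fin n) (Fin n) R)) :
    ∃ l ∈ elemGL n R, IsClearedOn D (↑(l * g) : Matrix (Fin n) (Fin n) R) ∧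
      IsUnit ((↑(l * g) : Matrix (Fin n) (Fin n) R) e e) := by
  set M : Matrix (Fin n) (Fin n) R := ↑g
  set N : Matrix (Fin n) (Fin n) R := ↑g⁻¹
  -- Rows indexed by `D` are not used: they would put nonzero entries into the cleared columns.
  set y : Fin n → R := fun j => if j ∈ insert e D then 0 else N e j
  have hcop : IsCoprime (M e e) (y ⬝ᵥ fun j => M j e) := by
    refine ⟨N e e, 1, ?_⟩
    have h1 : (N * M) e e = 1 := by simp [N, M]
    rw [mul_apply] at h1
    rw [one_mul, ← h1]
    calc N e e * M e e + y ⬝ᵥ (fun j => M j e)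
        = ∑ j, ((if j = e then N e e * M e e else 0) + y j * M j e) := by
          simp [Finset.sum_add_distrib, dotProduct]
      _ = ∑ j, N e j * M j e := Finset.sum_congr rfl fun j _ => ?_
    by_cases hje : j = e
    · simp [hje, y]
    by_cases hjD : j ∈ D
    · simp [hje, hjD, y, hg j e hje (Or.inl hjD)]
    · simp [hje, hjD, y]
  obtain ⟨t, ht⟩ := exists_isUnit_add_mul_of_isCoprime hcop
  obtain ⟨l, hl, hlM⟩ :=
    exists_mem_elemGL_val_eq_one_add_vecMulVec (Pi.single e 1) (t • y) fun i => by
      by_cases hi : i = e <;> simp [hi, y]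
  have key (a b : Fin n) : (↑(l * g) : Matrix (Fin n) (Fin n) R) a b =
      M a b + if a = e then t * ∑ j, y j * M j b else 0 := by
    simp [hlM, Matrix.add_mul, vecMulVec_mul, vecMulVec_apply, Pi.single_apply, vecMul,
      dotProduct, Finset.mul_sum, M]
  refine ⟨l, hl, fun a b hab hD => ?_, ?_⟩
  · rw [key, hg a b hab hD, zero_add]
    by_cases hae : a = e
    · have hbD : b ∈ D := hD.resolve_left (hae ▸ he)
      have hsum : ∑ j, y j * M j b = 0 := Finset.sum_eq_zero fun j _ => by
        by_cases hj : j ∈ insert e D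
        · rw [show y j = 0 from if_pos hj, zero_mul]
        · rw [hg j b (by rintro rfl; exact hj (Finset.mem_insert_of_mem hbD)) (Or.inr hbD),
            mul_zero]
      rw [if_pos hae, hsum, mul_zero]
    · simp [hae]
  · rw [key]
    simpa [dotProduct] using ht

theorem exists_mem_elemGL_isClearedOn_insert [Finite (MaximalSpectrum R)] {D : Finset (Fin n)}
    {e : Fin n} (he : e ∉ D) (g : GL (Fin n) R)
    (hg : IsClearedOn D (g : Matrix (Fin n) (Fin n) R)) :
    ∃ l ∈ elemGL n R, ∃ r ∈ elemGL n R,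
      IsClearedOn (insert e D) (↑(l * g * r) : Matrix (Fin n) (Fin n) R) := by
  obtain ⟨l₁, hl₁, hc, hu⟩ := exists_mem_elemGL_isUnit_pivot he g hg
  obtain ⟨l₂, hl₂, r, hr, hcol, hrow, hrest⟩ :=
    exists_mem_elemGL_clear_row_col _ e hu.unit hu.unit_spec.symm
  refine ⟨l₂ * l₁, mul_mem hl₂ hl₁, r, hr, fun a b hab hD => ?_⟩
  rw [show l₂ * l₁ * g * r = l₂ * (l₁ * g) * r by group, Units.val_mul, Units.val_mul]
  by_cases hae : a = e
  · exact hae ▸ hrow b (hae ▸ hab.symm)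
  by_cases hbe : b = e
  · exact hbe ▸ hcol a hae
  have hD' : a ∈ D ∨ b ∈ D := by simpa [hae, hbe] using hD
  rw [hrest a b hae hbe, hc a b hab hD']
  rcases hD' with haD | hbD
  · rw [hc a e hae (Or.inl haD)]; ring
  · rw [hc e b (Ne.symm hbe) (Or.inr hbD)]; ring

theorem exists_mem_elemGL_isDiag [Finite (MaximalSpectrum R)] (g : GL (Fin n) R) :
    ∃ l ∈ elemGL n R, ∃ r ∈ elemGL n R,
      (↑(l * g * r) : Matrix (Fin n) (Fin n) R).IsDiag := by
  suffices h : ∀ D : Finset (Fin n), ∃ l ∈ elemGL n R, ∃ r ∈ elemGL n R,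
      IsClearedOn D (↑(l * g * r) : Matrix (Fin n) (Fin n) R) by
    obtain ⟨l, hl, r, hr, hc⟩ := h Finset.univ
    exact ⟨l, hl, r, hr, fun i j hij => hc i j hij (Or.inl (Finset.mem_univ i))⟩
  intro D
  induction D using Finset.induction with
  | empty => exact ⟨1, one_mem _, 1, one_mem _, fun i j _ h => by simp at h⟩
  | insert e D he ih =>
    obtain ⟨l, hl, r, hr, hc⟩ := ih
    obtain ⟨l', hl', r', hr', hc'⟩ := exists_mem_elemGL_isClearedOn_insert he _ hc
    refine ⟨l' * l, mul_mem hl' hl, r * r', mul_mem hr hr', ?_⟩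
    rwa [show l' * l * g * (r * r') = l' * (l * g * r) * r' by group]

theorem mem_elemGL_of_det_eq_one [Finite (MaximalSpectrum R)] {g : GL (Fin n) R}
    (hg : det (g : Matrix (Fin n) (Fin n) R) = 1) : g ∈ elemGL n R := by
  obtain ⟨l, hl, r, hr, hdiag⟩ := exists_mem_elemGL_isDiag g
  have hdet : det (↑(l * g * r) : Matrix (Fin n) (Fin n) R) = 1 := by
    simp [det_mul, det_eq_one_of_mem_elemGL hl, det_eq_one_of_mem_elemGL hr, hg]
  have hlgr := mem_elemGL_of_isDiag hdiag hdet
  have := mul_mem (mul_mem (inv_mem hl) hlgr) (inv_mem hr)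
  rwa [show l⁻¹ * (l * g * r) * r⁻¹ = g by group] at this

end Elimination

theorem K1_inj_fraction_field_general (n : ℕ)
    (A : Type*) [CommRing A]
    (hsemiloc : Finite {I : Ideal A // I.IsMaximal})
    (g : GL (Fin n) A)
    (hg : glMap (algebraMap A (FractionRing A)) g ∈ elemGL n (FractionRing A)) :
    g ∈ elemGL n A := by
  have : Finite (MaximalSpectrum A) := .of_equiv _ (MaximalSpectrum.equivSubtype A).symm
  refine mem_elemGL_of_det_eq_one (IsFractionRing.injective A (FractionRing A) ?_)
  rw [map_one, RingHom.map_det]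
  exact det_eq_one_of_mem_elemGL hg

/-- Injectivity: for a semilocal regular domain `A` containing a field `k`, with fraction
field `K`, the map `GL_n(A)/E_n(A) → GL_n(K)/E_n(K)` is injective: a matrix over `A` that
becomes a product of elementary matrices over `K` is already elementary over `A`. -/
theorem K1_inj_fraction_field (n : ℕ) (hn : 3 ≤ n) (k : Type*) [Field k]
    (A : Type*) [CommRing A] [IsDomain A] [Algebra k A]
    (hsemiloc : Finite {I : Ideal A // I.IsMaximal}) (hA : IsRegularRingOld A)
    (g : GL (Fin n) A)
    (hg : glMap (algebraMap A (FractionRing A)) g ∈ elemGL n (FractionRing A)) :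
    g ∈ elemGL n A :=
  K1_inj_fraction_field_general n A hsemiloc g hg
end

section
/- Let B → A be a ring homomorphism, h ∈ B with image f·u in A for a unit u, such that B/hB → A/fA is an isomorphism. Then for any b ∈ B whose image in B_h is a unit and whose image in A is a unit, b is a unit in B. -/
/-! Since `b` becomes a unit in `B_h`, it divides some power `h ^ N`. Since `φ b` is a unit, so is
its class in `A/fA ≅ B/hB`, i.e. `b` is coprime to `h`, hence to `h ^ N`. A divisor of `h ^ N`
coprime to `h ^ N` is a unit. -/

theorem Ideal.isCoprime_of_isUnit_mk_span_singleton {R : Type*} [CommRing R] {a b : R}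
    (hb : IsUnit (Ideal.Quotient.mk (Ideal.span {a}) b)) : IsCoprime b a := by
  obtain ⟨c, hc⟩ := hb.exists_right_inv
  obtain ⟨d, rfl⟩ := Ideal.Quotient.mk_surjective c
  rw [← map_mul, ← map_one (Ideal.Quotient.mk _), Ideal.Quotient.eq,
    Ideal.mem_span_singleton'] at hc
  obtain ⟨t, ht⟩ := hc
  exact ⟨d, -t, by linear_combination -ht⟩

theorem Ideal.isUnit_mk_of_bijective_quotientMap {B A : Type*} [CommRing B] [CommRing A]
    {I : Ideal B} (J : Ideal A) (φ : B →+* A) (hle : I ≤ J.comap φ)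
    (hbij : Function.Bijective (Ideal.quotientMap J φ hle)) {b : B} (hb : IsUnit (φ b)) :
    IsUnit (Ideal.Quotient.mk I b) := by
  rw [← isUnit_map_iff (RingEquiv.ofBijective _ hbij)]
  exact hb.map (Ideal.Quotient.mk J)

theorem IsLocalization.Away.isUnit_of_isUnit_algebraMap_of_isCoprime {R S : Type*} [CommRing R]
    [CommRing S] [Algebra R S] {a : R} [IsLocalization.Away a S] {b : R}
    (hb : IsUnit (algebraMap R S b)) (hcop : IsCoprime b a) : IsUnit b := by
  obtain ⟨N, hdvd⟩ := (IsLocalization.Away.algebraMap_isUnit_iff a).mp hb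
  exact hcop.pow_right.isUnit_of_dvd' dvd_rfl hdvd

theorem units_nisnevich_patching_general {B A : Type*} [CommRing B] [CommRing A]
    (φ : B →+* A) (h : B) (f : A)
    (hle : Ideal.span {h} ≤ (Ideal.span {f}).comap φ)
    (hbij : Function.Bijective (Ideal.quotientMap (Ideal.span {f}) φ hle))
    (b : B) (hb1 : IsUnit (algebraMap B (Localization.Away h) b))
    (hb2 : IsUnit (φ b)) : IsUnit b :=
  IsLocalization.Away.isUnit_of_isUnit_algebraMap_of_isCoprime hb1 <|
    Ideal.isCoprime_of_isUnit_mk_span_singleton <|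
      Ideal.isUnit_mk_of_bijective_quotientMap _ φ hle hbij hb2

/-- Units are glued in a Nisnevich square: if `φ : B → A`, `h ∈ B`, `φ(h) = f·u` for a unit
`u`, and `B/hB → A/fA` is an isomorphism, then `b ∈ B` whose images in `B_h` and in `A` are
units is itself a unit. -/
theorem units_nisnevich_patching {B A : Type*} [CommRing B] [CommRing A]
    (φ : B →+* A) (h : B) (f : A) (u : Aˣ) (hfu : φ h = f * u)
    (hle : Ideal.span {h} ≤ (Ideal.span {f}).comap φ)
    (hbij : Function.Bijective (Ideal.quotientMap (Ideal.span {f}) φ hle))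
    (b : B) (hb1 : IsUnit (algebraMap B (Localization.Away h) b))
    (hb2 : IsUnit (φ b)) : IsUnit b :=
  units_nisnevich_patching_general φ h f hle hbij b hb1 hb2
end
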